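/- arXiv:2006.06834 — 2 statements merged into one kernel-verified Lean document; each statement's English description precedes it below -/
import Mathlib

section
/- Let d, m be positive integers, α ∈ (1/2, 1], β ∈ ℝ, Z > 0, and let p ∈ ℝ^d be a unit vector. If t is sampled from the standard Gaussian measure γ_d on ℝ^d, then the vector-valued expectation E[(α · m · exp(β⟨t, p⟩)/Z + (1 − α)) · t] equals ρ · p, where ρ = m·α·β·exp(β^2/2)/Z. In particular the uniform (noise) component of the AttEST mixture contributes zero to the mean, and the mean of a trigram sampled at position i of a query (with the partition function replaced by its concentrated value Z_i) is ρ_i · p with ρ_i = m·α_i·β_i·exp(β_i^2/2)/Z_i. -/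
/-! If `v = E[f ⟪t, p⟫ • t]`, then `v` is fixed by every reflection in a hyperplane containing `p`:
the standard Gaussian is invariant under linear isometries, and such a reflection fixes `⟪t, p⟫`.
Hence `v` is a multiple of the unit vector `p`, namely `⟪p, v⟫ • p = E[X f X] • p` where
`X = ⟪t, p⟫ ~ N(0, 1)`. For `f x = a * exp (β * x) + b` this one-dimensional moment is
`a * β * exp (β ^ 2 / 2)`, the derivative at `β` of the moment generating function
`s ↦ exp (s ^ 2 / 2)`. -/

open MeasureTheory ProbabilityTheory

/-- The standard Gaussian measure on `ℝ^d`: the law of a vector with `d` independent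
standard normal coordinates. -/
noncomputable def stdGaussian (d : ℕ) : Measure (EuclideanSpace ℝ (Fin d)) :=
  (Measure.pi fun _ => gaussianReal 0 1).map (MeasurableEquiv.toLp 2 (Fin d → ℝ))

open Real Submodule
open scoped NNReal RealInnerProductSpace

section OneDim

variable {μ : ℝ} {v : ℝ≥0}

lemma integral_mul_exp_mul_gaussianReal (t : ℝ) :
    ∫ x, x * exp (t * x) ∂gaussianReal μ v = (μ + v * t) * exp (μ * t + v * t ^ 2 / 2) := by
  rw [← deriv_mgf (X := fun x ↦ x) (by simp), mgf_fun_id_gaussianReal]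
  have hd := (((hasDerivAt_id' t).const_mul μ).fun_add
    (((hasDerivAt_pow 2 t).const_mul (v : ℝ)).div_const 2)).exp
  exact hd.deriv.trans (by push_cast; ring)

lemma integrable_mul_exp_mul_gaussianReal (t : ℝ) :
    Integrable (fun x ↦ x * exp (t * x)) (gaussianReal μ v) := by
  simpa using integrable_pow_mul_exp_of_mem_interior_integrableExpSet
    (X := fun x ↦ x) (μ := gaussianReal μ v) (v := t) (by simp) 1

lemma memLp_two_exp_mul_gaussianReal (t : ℝ) :
    MemLp (fun x ↦ exp (t * x)) 2 (gaussianReal μ v) := by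
  rw [memLp_two_iff_integrable_sq (by fun_prop)]
  simpa [← exp_nat_mul, mul_assoc] using integrable_exp_mul_gaussianReal (μ := μ) (v := v) (2 * t)

end OneDim

section StdGaussian

variable {E : Type*} [NormedAddCommGroup E] [InnerProductSpace ℝ E] {p : E}

lemma eq_inner_smul_of_forall_reflection_eq_self (hp : ‖p‖ = 1) {v : E}
    (hv : ∀ w, ⟪w, p⟫ = 0 → reflection (ℝ ∙ w)ᗮ v = v) : v = ⟪p, v⟫ • p := by
  set w := v - ⟪p, v⟫ • p with hw
  have hwp : ⟪w, p⟫ = 0 := by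
    simp [w, inner_sub_left, inner_smul_left, hp, real_inner_comm]
  have hvw : ⟪v, w⟫ = 0 := by
    have h := (reflection (ℝ ∙ w)ᗮ).inner_map_map v w
    rw [hv w hwp, reflection_orthogonalComplement_singleton_eq_neg, inner_neg_right] at h
    linarith
  have hww : ⟪w, w⟫ = 0 := by
    nth_rewrite 1 [hw]
    rw [inner_sub_left, real_inner_smul_left, hvw, real_inner_comm w p, hwp, mul_zero, sub_zero]
  exact sub_eq_zero.1 (inner_self_eq_zero.1 hww)

variable [FiniteDimensional ℝ E] [MeasurableSpace E] [BorelSpace E]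

lemma stdGaussian_map_inner (hp : ‖p‖ = 1) :
    (stdGaussian E).map (fun t ↦ ⟪t, p⟫) = gaussianReal 0 1 := by
  have h := IsGaussian.map_eq_gaussianReal (μ := stdGaussian E) (innerSL ℝ p)
  rw [integral_strongDual_stdGaussian, variance_dual_stdGaussian, innerSL_apply_norm, hp] at h
  simpa [innerSL_apply_apply, real_inner_comm p] using h

lemma integrable_comp_inner_smul_stdGaussian (hp : ‖p‖ = 1) {f : ℝ → ℝ}
    (hf : MemLp f 2 (gaussianReal 0 1)) :
    Integrable (fun t ↦ f ⟪t, p⟫ • t) (stdGaussian E) := by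
  have hinner : AEMeasurable (fun t : E ↦ ⟪t, p⟫) (stdGaussian E) := by fun_prop
  rw [← stdGaussian_map_inner hp] at hf
  have hfp := (memLp_map_measure_iff hf.aestronglyMeasurable hinner).1 hf
  rw [← memLp_one_iff_integrable]
  exact IsGaussian.memLp_two_id.smul hfp

lemma LinearIsometryEquiv.map_integral_comp_inner_smul_stdGaussian (R : E ≃ₗᵢ[ℝ] E)
    (hR : R p = p) (f : ℝ → ℝ) :
    R (∫ t, f ⟪t, p⟫ • t ∂stdGaussian E) = ∫ t, f ⟪t, p⟫ • t ∂stdGaussian E := by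
  calc R (∫ t, f ⟪t, p⟫ • t ∂stdGaussian E)
      = ∫ t, R (f ⟪t, p⟫ • t) ∂stdGaussian E := (R.toLinearIsometry.integral_comp_comm _).symm
    _ = ∫ t, f ⟪R t, p⟫ • R t ∂stdGaussian E := by
        congr with t
        rw [map_smul]
        conv_rhs => rw [← hR, R.inner_map_map]
    _ = ∫ t, f ⟪t, p⟫ • t ∂(stdGaussian E).map R.toHomeomorph.toMeasurableEquiv := by
        rw [integral_map_equiv]; rfl
    _ = ∫ t, f ⟪t, p⟫ • t ∂stdGaussian E := by
        congr
        exact stdGaussian_map R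

theorem integral_comp_inner_smul_stdGaussian (hp : ‖p‖ = 1) {f : ℝ → ℝ}
    (hf : MemLp f 2 (gaussianReal 0 1)) :
    ∫ t, f ⟪t, p⟫ • t ∂stdGaussian E = (∫ x, x * f x ∂gaussianReal 0 1) • p := by
  set v := ∫ t, f ⟪t, p⟫ • t ∂stdGaussian E
  have hfix : ∀ w, ⟪w, p⟫ = 0 → reflection (ℝ ∙ w)ᗮ v = v := fun w hw ↦
    (reflection (ℝ ∙ w)ᗮ).map_integral_comp_inner_smul_stdGaussian
      (reflection_mem_subspace_eq_self ((mem_orthogonal_singleton_iff_inner_right).2 hw)) f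
  have hpv : ⟪p, v⟫ = ∫ x, x * f x ∂gaussianReal 0 1 := by
    rw [← integral_inner (integrable_comp_inner_smul_stdGaussian hp hf), ← stdGaussian_map_inner hp,
      integral_map (by fun_prop) ?_]
    · simp [inner_smul_right, real_inner_comm, mul_comm]
    · rw [stdGaussian_map_inner hp]
      exact aestronglyMeasurable_id.mul hf.aestronglyMeasurable
  rw [eq_inner_smul_of_forall_reflection_eq_self hp hfix, hpv]

end StdGaussian

lemma stdGaussian_eq_stdGaussian_euclideanSpace (d : ℕ) :
    _root_.stdGaussian d = ProbabilityTheory.stdGaussian (EuclideanSpace ℝ (Fin d)) :=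
  map_pi_eq_stdGaussian

theorem attest_trigram_mean_general (d m : ℕ)
    (α : ℝ) (β : ℝ) (Z : ℝ)
    (p : EuclideanSpace ℝ (Fin d)) (hp : ‖p‖ = 1) :
    ∫ t, (α * m * Real.exp (β * inner ℝ t p) / Z + (1 - α)) • t ∂(stdGaussian d)
      = ((m : ℝ) * α * β * Real.exp (β ^ 2 / 2) / Z) • p := by
  have hf : MemLp (fun x ↦ α * m * exp (β * x) / Z + (1 - α)) 2 (gaussianReal 0 1) := by
    convert ((memLp_two_exp_mul_gaussianReal β).const_mul (α * m / Z)).add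
      (memLp_const (1 - α)) using 2 with x
    simp only [Pi.add_apply]
    ring
  rw [stdGaussian_eq_stdGaussian_euclideanSpace, integral_comp_inner_smul_stdGaussian hp hf]
  have hsplit : ∀ x : ℝ, x * (α * m * exp (β * x) / Z + (1 - α))
      = α * m / Z * (x * exp (β * x)) + (1 - α) * x := fun x ↦ by ring
  simp_rw [hsplit]
  rw [integral_add ((integrable_mul_exp_mul_gaussianReal β).const_mul _)
      (IsGaussian.integrable_fun_id.const_mul _), integral_const_mul, integral_const_mul,
    integral_mul_exp_mul_gaussianReal, integral_id_gaussianReal]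
  congr 1
  simp only [NNReal.coe_one, zero_add, zero_mul, one_mul, mul_zero, add_zero]
  ring

/-- **Mean of a trigram in the AttEST model.**
Let `d, m` be positive integers, `α ∈ (1/2, 1]`, `β ∈ ℝ`, `Z > 0`, and `p ∈ ℝ^d` a unit
vector.  If `t` is sampled from the standard Gaussian measure `γ_d` on `ℝ^d`, then the
vector-valued expectation `E[(α * m * exp (β * ⟪t, p⟫) / Z + (1 - α)) • t]` equals
`ρ • p` where `ρ = m * α * β * exp (β ^ 2 / 2) / Z`.  In particular the uniform (noise)
component of the AttEST mixture contributes zero to the mean. -/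
theorem attest_trigram_mean (d m : ℕ) (hd : 0 < d) (hm : 0 < m)
    (α : ℝ) (hα : α ∈ Set.Ioc (1 / 2 : ℝ) 1) (β : ℝ) (Z : ℝ) (hZ : 0 < Z)
    (p : EuclideanSpace ℝ (Fin d)) (hp : ‖p‖ = 1) :
    ∫ t, (α * m * Real.exp (β * inner ℝ t p) / Z + (1 - α)) • t ∂(stdGaussian d)
      = ((m : ℝ) * α * β * Real.exp (β ^ 2 / 2) / Z) • p :=
  attest_trigram_mean_general d m α β Z p hp
end

section
/- Let d be a positive integer, u, v ∈ ℝ^d, constants C₁ > 0, C₂ > 0, error parameters 0 ≤ ε', ε'' ≤ 1/2, and positive reals P₁₂, P₁, P₂ satisfying: (1−ε')·C₁C₂·exp(‖u+v‖²/(2d)) ≤ P₁₂ ≤ (1+ε')·C₁C₂·exp(‖u+v‖²/(2d)), (1−ε'')·C₁·exp(‖u‖²/(2d)) ≤ P₁ ≤ (1+ε'')·C₁·exp(‖u‖²/(2d)), and (1−ε'')·C₂·exp(‖v‖²/(2d)) ≤ P₂ ≤ (1+ε'')·C₂·exp(‖v‖²/(2d)). Then |log(P₁₂/(P₁·P₂))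 − ⟨u, v⟩/d| ≤ 2ε' + 4ε''. -/
/-!
Taking logarithms turns the multiplicative errors `1 ± ε` into additive errors of at most `2ε`
each, while the main terms combine to `(‖u + v‖² - ‖u‖² - ‖v‖²) / (2d) = ⟪u, v⟫ / d`, the
normalising constants `C₁, C₂` cancelling.
-/

open Real

section gaussWeight

variable {E : Type*} [NormedAddCommGroup E]

/-- The main term `C · exp (‖u‖² / (2d))` of the co-occurrence probabilities. -/
noncomputable def gaussWeight (C s : ℝ) (u : E) : ℝ :=
  C * exp (‖u‖ ^ 2 / (2 * s))

lemma gaussWeight_pos {C : ℝ} (hC : 0 < C) (s : ℝ) (u : E) : 0 < gaussWeight C s u := by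
  unfold gaussWeight; positivity

lemma log_gaussWeight {C : ℝ} (hC : C ≠ 0) (s : ℝ) (u : E) :
    log (gaussWeight C s u) = log C + ‖u‖ ^ 2 / (2 * s) := by
  rw [gaussWeight, log_mul hC (exp_ne_zero _), log_exp]

lemma log_gaussWeight_add_sub_log_gaussWeight_sub_log_gaussWeight [InnerProductSpace ℝ E]
    {C₁ C₂ : ℝ} (hC₁ : C₁ ≠ 0) (hC₂ : C₂ ≠ 0) (s : ℝ) (u v : E) :
    log (gaussWeight (C₁ * C₂) s (u + v)) - log (gaussWeight C₁ s u)
      - log (gaussWeight C₂ s v) = inner ℝ u v / s := by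
  rw [log_gaussWeight (mul_ne_zero hC₁ hC₂), log_gaussWeight hC₁, log_gaussWeight hC₂,
    log_mul hC₁ hC₂, norm_add_sq_real, ← mul_div_mul_left (inner ℝ u v) s two_ne_zero]
  ring

end gaussWeight

/-- The lower bound comes from `log r ≥ 1 - 1/r`, which costs the factor `1/(1 - ε) ≤ 2`. -/
lemma abs_log_le_two_mul_of_abs_sub_one_le {r ε : ℝ} (hε : ε ≤ 1 / 2) (hr : |r - 1| ≤ ε) :
    |log r| ≤ 2 * ε := by
  obtain ⟨hr_ge, hr_le⟩ := abs_le.mp hr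
  have hr_pos : 0 < r := by linarith
  have h_upper : log r ≤ r - 1 := log_le_sub_one_of_pos hr_pos
  have h_lower : 1 - r⁻¹ ≤ log r := one_sub_inv_le_log_of_pos hr_pos
  have h_inv : r⁻¹ ≤ 1 + 2 * ε := by
    rw [inv_le_iff_one_le_mul₀ hr_pos]
    nlinarith
  rw [abs_le]
  constructor <;> linarith

lemma pos_of_one_sub_mul_le {A P ε : ℝ} (hA : 0 < A) (hε : ε < 1) (hl : (1 - ε) * A ≤ P) :
    0 < P :=
  (mul_pos (by linarith) hA).trans_le hl

lemma abs_log_sub_log_le_two_mul {A P ε : ℝ} (hA : 0 < A) (hε : ε ≤ 1 / 2)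
    (hl : (1 - ε) * A ≤ P) (hu : P ≤ (1 + ε) * A) :
    |log P - log A| ≤ 2 * ε := by
  have hP : 0 < P := pos_of_one_sub_mul_le hA (by linarith) hl
  rw [← log_div hP.ne' hA.ne']
  refine abs_log_le_two_mul_of_abs_sub_one_le hε (abs_le.mpr ⟨?_, ?_⟩)
  · rw [le_sub_iff_add_le, le_div_iff₀ hA]; linarith
  · rw [sub_le_iff_le_add, div_le_iff₀ hA]; linarith

theorem pmi_eq_inner_product_general (d : ℕ)
    (u v : EuclideanSpace ℝ (Fin d)) (C₁ C₂ : ℝ) (hC₁ : 0 < C₁) (hC₂ : 0 < C₂)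
    (ε' ε'' : ℝ) (hε'1 : ε' ≤ 1 / 2) (hε''1 : ε'' ≤ 1 / 2)
    (P₁₂ P₁ P₂ : ℝ)
    (h12l : (1 - ε') * (C₁ * C₂ * Real.exp (‖u + v‖ ^ 2 / (2 * d))) ≤ P₁₂)
    (h12u : P₁₂ ≤ (1 + ε') * (C₁ * C₂ * Real.exp (‖u + v‖ ^ 2 / (2 * d))))
    (h1l : (1 - ε'') * (C₁ * Real.exp (‖u‖ ^ 2 / (2 * d))) ≤ P₁)
    (h1u : P₁ ≤ (1 + ε'') * (C₁ * Real.exp (‖u‖ ^ 2 / (2 * d))))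
    (h2l : (1 - ε'') * (C₂ * Real.exp (‖v‖ ^ 2 / (2 * d))) ≤ P₂)
    (h2u : P₂ ≤ (1 + ε'') * (C₂ * Real.exp (‖v‖ ^ 2 / (2 * d)))) :
    |Real.log (P₁₂ / (P₁ * P₂)) - (inner ℝ u v : ℝ) / d| ≤ 2 * ε' + 4 * ε'' := by
  have hA₁₂ := gaussWeight_pos (mul_pos hC₁ hC₂) d (u + v)
  have hA₁ := gaussWeight_pos hC₁ d u
  have hA₂ := gaussWeight_pos hC₂ d v
  have e₁₂ := abs_log_sub_log_le_two_mul hA₁₂ hε'1 h12l h12u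
  have e₁ := abs_log_sub_log_le_two_mul hA₁ hε''1 h1l h1u
  have e₂ := abs_log_sub_log_le_two_mul hA₂ hε''1 h2l h2u
  have hP₁₂ := pos_of_one_sub_mul_le hA₁₂ (by linarith) h12l
  have hP₁ := pos_of_one_sub_mul_le hA₁ (by linarith) h1l
  have hP₂ := pos_of_one_sub_mul_le hA₂ (by linarith) h2l
  rw [log_div hP₁₂.ne' (mul_pos hP₁ hP₂).ne', log_mul hP₁.ne' hP₂.ne',
    ← log_gaussWeight_add_sub_log_gaussWeight_sub_log_gaussWeight hC₁.ne' hC₂.ne']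
  rw [abs_le] at *
  constructor <;> linarith

/-- **PMI equals the scaled inner product of query embeddings.**
Let `u, v ∈ ℝ^d` be query embeddings, `C₁, C₂ > 0`, `0 ≤ ε', ε'' ≤ 1/2`, and suppose the
co-occurrence probability `P₁₂` and the single-query probabilities `P₁, P₂` satisfy the
multiplicative bounds of the AttEST co-occurrence theorems.  Then
`|log (P₁₂ / (P₁ * P₂)) - ⟪u, v⟫ / d| ≤ 2 ε' + 4 ε''`. -/
theorem pmi_eq_inner_product (d : ℕ) (hd : 0 < d)
    (u v : EuclideanSpace ℝ (Fin d)) (C₁ C₂ : ℝ) (hC₁ : 0 < C₁) (hC₂ : 0 < C₂)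
    (ε' ε'' : ℝ) (hε'0 : 0 ≤ ε') (hε'1 : ε' ≤ 1 / 2) (hε''0 : 0 ≤ ε'') (hε''1 : ε'' ≤ 1 / 2)
    (P₁₂ P₁ P₂ : ℝ) (hP₁₂ : 0 < P₁₂) (hP₁ : 0 < P₁) (hP₂ : 0 < P₂)
    (h12l : (1 - ε') * (C₁ * C₂ * Real.exp (‖u + v‖ ^ 2 / (2 * d))) ≤ P₁₂)
    (h12u : P₁₂ ≤ (1 + ε') * (C₁ * C₂ * Real.exp (‖u + v‖ ^ 2 / (2 * d))))
    (h1l : (1 - ε'') * (C₁ * Real.exp (‖u‖ ^ 2 / (2 * d))) ≤ P₁)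
    (h1u : P₁ ≤ (1 + ε'') * (C₁ * Real.exp (‖u‖ ^ 2 / (2 * d))))
    (h2l : (1 - ε'') * (C₂ * Real.exp (‖v‖ ^ 2 / (2 * d))) ≤ P₂)
    (h2u : P₂ ≤ (1 + ε'') * (C₂ * Real.exp (‖v‖ ^ 2 / (2 * d)))) :
    |Real.log (P₁₂ / (P₁ * P₂)) - (inner ℝ u v : ℝ) / d| ≤ 2 * ε' + 4 * ε'' :=
  pmi_eq_inner_product_general d u v C₁ C₂ hC₁ hC₂ ε' ε'' hε'1 hε''1 P₁₂ P₁ P₂ h12l h12u h1l h1u h2l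
    h2u
end
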